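/- arXiv:1602.07398 — 4 statements merged into one kernel-verified Lean document; each statement's English description precedes it below -/
import Mathlib

section
/- If v₀, v₁ satisfy the ODE system D·v₀''(x) = β·v₀(x) − α·v₁(x) and D·v₁''(x) = α·v₁(x) − β·v₀(x) on [0, L] together with the Neumann conditions v₀'(0) = 0 and v₁'(0) = 0 (the boundary conditions at x = L are not needed), then the sum v₀ + v₁ is constant on [0, L]: there exists K ∈ ℝ with v₀(x) + v₁(x) = K for all x ∈ [0, L]. (This is the paper's claim in Example 2.1 that the large-time mean neurotransmitter concentration is constant in space.) -/
/-!
Adding the two equations cancels the reaction terms, so `w = v₀ + v₁` satisfies `w'' = 0`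
on `[0, L]`. With the Neumann condition `w'(0) = 0` this forces `w' = 0`, and hence `w` is
constant.
-/

open Set

theorem ContDiffOn.hasDerivAt_of_isOpen {f : ℝ → ℝ} {U : Set ℝ} {n : WithTop ℕ∞}
    (hf : ContDiffOn ℝ n f U) (hn : n ≠ 0) (hU : IsOpen U) {x : ℝ} (hx : x ∈ U) :
    HasDerivAt f (deriv f x) x :=
  ((hf.differentiableOn hn x hx).differentiableAt (hU.mem_nhds hx)).hasDerivAt

theorem ContDiffOn.hasDerivAt_deriv_of_isOpen {f : ℝ → ℝ} {U : Set ℝ}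
    (hf : ContDiffOn ℝ 2 f U) (hU : IsOpen U) {x : ℝ} (hx : x ∈ U) :
    HasDerivAt (deriv f) (deriv (deriv f) x) x :=
  (hf.deriv_of_isOpen hU (m := 1) (by norm_num)).hasDerivAt_of_isOpen one_ne_zero hU hx

theorem eq_left_of_hasDerivAt_zero_on_Icc {f : ℝ → ℝ} {a b : ℝ}
    (hf : ∀ x ∈ Icc a b, HasDerivAt f 0 x) : ∀ x ∈ Icc a b, f x = f a :=
  constant_of_has_deriv_right_zero (fun x hx => (hf x hx).continuousAt.continuousWithinAt)
    fun x hx => (hf x (Ico_subset_Icc_self hx)).hasDerivWithinAt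

theorem eq_left_of_hasDerivAt_of_hasDerivAt_zero_on_Icc {f f' : ℝ → ℝ} {a b : ℝ}
    (hf : ∀ x ∈ Icc a b, HasDerivAt f (f' x) x) (hf' : ∀ x ∈ Icc a b, HasDerivAt f' 0 x)
    (hf'a : f' a = 0) : ∀ x ∈ Icc a b, f x = f a := by
  have hf'_zero : ∀ x ∈ Icc a b, f' x = 0 := fun x hx =>
    (eq_left_of_hasDerivAt_zero_on_Icc hf' x hx).trans hf'a
  exact eq_left_of_hasDerivAt_zero_on_Icc fun x hx => hf'_zero x hx ▸ hf x hx

theorem neurotransmitter_mean_sum_constant_general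
    (L D α β : ℝ) (hD : 0 < D)
    (v₀ v₁ : ℝ → ℝ) (a b : ℝ) (ha : a < 0) (hb : L < b)
    (hreg0 : ContDiffOn ℝ 2 v₀ (Set.Ioo a b))
    (hreg1 : ContDiffOn ℝ 2 v₁ (Set.Ioo a b))
    (hode0 : ∀ x ∈ Set.Icc (0:ℝ) L, D * deriv (deriv v₀) x = β * v₀ x - α * v₁ x)
    (hode1 : ∀ x ∈ Set.Icc (0:ℝ) L, D * deriv (deriv v₁) x = α * v₁ x - β * v₀ x)
    (hbc0 : deriv v₀ 0 = 0) (hbc1 : deriv v₁ 0 = 0) :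
    ∃ K : ℝ, ∀ x ∈ Set.Icc (0:ℝ) L, v₀ x + v₁ x = K := by
  have hsub : Icc 0 L ⊆ Ioo a b := Icc_subset_Ioo ha hb
  have hsum : ∀ x ∈ Icc 0 L,
      HasDerivAt (fun y => v₀ y + v₁ y) (deriv v₀ x + deriv v₁ x) x := fun x hx =>
    (hreg0.hasDerivAt_of_isOpen two_ne_zero isOpen_Ioo (hsub hx)).add
      (hreg1.hasDerivAt_of_isOpen two_ne_zero isOpen_Ioo (hsub hx))
  have hsum' : ∀ x ∈ Icc 0 L, HasDerivAt (fun y => deriv v₀ y + deriv v₁ y) 0 x := by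
    intro x hx
    have hcancel : deriv (deriv v₀) x + deriv (deriv v₁) x = 0 := by
      refine (mul_eq_zero.mp ?_).resolve_left hD.ne'
      linear_combination hode0 x hx + hode1 x hx
    rw [← hcancel]
    exact (hreg0.hasDerivAt_deriv_of_isOpen isOpen_Ioo (hsub hx)).add
      (hreg1.hasDerivAt_deriv_of_isOpen isOpen_Ioo (hsub hx))
  exact ⟨_, eq_left_of_hasDerivAt_of_hasDerivAt_zero_on_Icc hsum hsum' (by simp [hbc0, hbc1])⟩

/-- For the neurotransmitter model, the ODE system together with the
Neumann conditions at `x = 0` forces `v₀ + v₁` to be constant on `[0, L]`. -/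
theorem neurotransmitter_mean_sum_constant
    (L D α β c : ℝ) (hL : 0 < L) (hD : 0 < D) (hα : 0 < α) (hβ : 0 < β) (hc : 0 < c)
    (v₀ v₁ : ℝ → ℝ) (a b : ℝ) (ha : a < 0) (hb : L < b)
    (hreg0 : ContDiffOn ℝ 2 v₀ (Set.Ioo a b))
    (hreg1 : ContDiffOn ℝ 2 v₁ (Set.Ioo a b))
    (hode0 : ∀ x ∈ Set.Icc (0:ℝ) L, D * deriv (deriv v₀) x = β * v₀ x - α * v₁ x)
    (hode1 : ∀ x ∈ Set.Icc (0:ℝ) L, D * deriv (deriv v₁) x = α * v₁ x - β * v₀ x)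
    (hbc0 : deriv v₀ 0 = 0) (hbc1 : deriv v₁ 0 = 0) :
    ∃ K : ℝ, ∀ x ∈ Set.Icc (0:ℝ) L, v₀ x + v₁ x = K :=
  neurotransmitter_mean_sum_constant_general L D α β hD v₀ v₁ a b ha hb hreg0 hreg1 hode0 hode1 hbc0
    hbc1
end

section
/- The pair of functions V₀(x) = (c·β/((α+β)·γ·sinh(γL)))·(cosh(γL) − cosh(γx)) and V₁(x) = (c·β/((α+β)·γ·sinh(γL)))·((β/α)·cosh(γL) + cosh(γx)) is a solution of the steady-state mean BVP of the neurotransmitter model: V₀ and V₁ are smooth on ℝ, satisfy D·V₀''(x) = β·V₀(x) − α·V₁(x) and D·V₁''(x) = α·V₁(x) − β·V₀(x) for all x ∈ [0, L], and satisfy the boundary conditions V₀'(0) = 0, V₁'(0) = 0, V₀(L) = 0, and V₁'(L) = c·β/(α+β). -/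
/-- The explicit pair `(V₀, V₁)` solves the steady-state mean BVP of the
neurotransmitter model. -/
theorem neurotransmitter_explicit_solution
    (L D α β c γ : ℝ) (hL : 0 < L) (hD : 0 < D) (hα : 0 < α) (hβ : 0 < β) (hc : 0 < c)
    (hγ : γ = Real.sqrt ((α + β) / D))
    (V₀ V₁ : ℝ → ℝ)
    (hV₀ : V₀ = fun x => (c * β / ((α + β) * γ * Real.sinh (γ * L))) *
      (Real.cosh (γ * L) - Real.cosh (γ * x)))
    (hV₁ : V₁ = fun x => (c * β / ((α + β) * γ * Real.sinh (γ * L))) *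
      ((β / α) * Real.cosh (γ * L) + Real.cosh (γ * x))) :
    ContDiff ℝ (⊤ : ℕ∞) V₀ ∧ ContDiff ℝ (⊤ : ℕ∞) V₁ ∧
    (∀ x ∈ Set.Icc (0:ℝ) L, D * deriv (deriv V₀) x = β * V₀ x - α * V₁ x) ∧
    (∀ x ∈ Set.Icc (0:ℝ) L, D * deriv (deriv V₁) x = α * V₁ x - β * V₀ x) ∧
    deriv V₀ 0 = 0 ∧ deriv V₁ 0 = 0 ∧
    V₀ L = 0 ∧ deriv V₁ L = c * β / (α + β) := by
  have hγpos : 0 < γ := by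
    rw [hγ]; exact Real.sqrt_pos.mpr (div_pos (by linarith) hD)
  have hγsq : γ ^ 2 = (α + β) / D := by
    rw [hγ, sq, Real.mul_self_sqrt (le_of_lt (div_pos (by linarith) hD))]
  have hsinhL : 0 < Real.sinh (γ * L) := Real.sinh_pos_iff.mpr (mul_pos hγpos hL)
  set K := c * β / ((α + β) * γ * Real.sinh (γ * L)) with hK
  -- derivative helpers
  have hlin : ∀ x : ℝ, HasDerivAt (fun x : ℝ => γ * x) γ x := fun x => by
    simpa using (hasDerivAt_id x).const_mul γ
  have hcosh : ∀ x : ℝ, HasDerivAt (fun x => Real.cosh (γ * x)) (γ * Real.sinh (γ * x)) x :=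
    fun x => by exact ((Real.hasDerivAt_cosh (γ * x)).comp x (hlin x)).congr_deriv (mul_comm _ _)
  have hsinh : ∀ x : ℝ, HasDerivAt (fun x => Real.sinh (γ * x)) (γ * Real.cosh (γ * x)) x :=
    fun x => by exact ((Real.hasDerivAt_sinh (γ * x)).comp x (hlin x)).congr_deriv (mul_comm _ _)
  have hd0 : ∀ x : ℝ, HasDerivAt V₀ (K * (0 - γ * Real.sinh (γ * x))) x := fun x => by
    rw [hV₀]; exact ((hasDerivAt_const x _).sub (hcosh x)).const_mul K
  have hd1 : ∀ x : ℝ, HasDerivAt V₁ (K * (0 + γ * Real.sinh (γ * x))) x := fun x => by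
    rw [hV₁]; exact ((hasDerivAt_const x _).add (hcosh x)).const_mul K
  have hD0 : deriv V₀ = fun x => K * (0 - γ * Real.sinh (γ * x)) :=
    funext fun x => (hd0 x).deriv
  have hD1 : deriv V₁ = fun x => K * (0 + γ * Real.sinh (γ * x)) :=
    funext fun x => (hd1 x).deriv
  have hdd0 : ∀ x : ℝ, HasDerivAt (deriv V₀) (K * (0 - γ * (γ * Real.cosh (γ * x)))) x :=
    fun x => by
      rw [hD0]
      exact ((hasDerivAt_const x _).sub ((hsinh x).const_mul γ)).const_mul K
  have hdd1 : ∀ x : ℝ, HasDerivAt (deriv V₁) (K * (0 + γ * (γ * Real.cosh (γ * x)))) x :=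
    fun x => by
      rw [hD1]
      exact ((hasDerivAt_const x _).add ((hsinh x).const_mul γ)).const_mul K
  have hγD : D * γ ^ 2 = α + β := by
    rw [hγsq]; field_simp [hD.ne']
  have hcd : ContDiff ℝ (⊤ : ℕ∞) fun x => Real.cosh (γ * x) :=
    Real.contDiff_cosh.comp (contDiff_const.mul contDiff_id)
  refine ⟨?_, ?_, ?_, ?_, ?_, ?_, ?_, ?_⟩
  · rw [hV₀]; exact contDiff_const.mul (contDiff_const.sub hcd)
  · rw [hV₁]; exact contDiff_const.mul (contDiff_const.add hcd)
  · intro x _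
    rw [(hdd0 x).deriv, hV₀, hV₁]
    have : α * (β / α) = β := by field_simp
    simp only []
    linear_combination (-(K * Real.cosh (γ * x))) * hγD + (K * Real.cosh (γ * L)) * this
  · intro x _
    rw [(hdd1 x).deriv, hV₀, hV₁]
    have : α * (β / α) = β := by field_simp
    simp only []
    linear_combination (K * Real.cosh (γ * x)) * hγD - (K * Real.cosh (γ * L)) * this
  · rw [hD0]; simp
  · rw [hD1]; simp
  · rw [hV₀]; simp
  · rw [hD1]
    have hne : (α + β) * γ * Real.sinh (γ * L) ≠ 0 := by positivity
    field_simp [hK]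
    have hKm : K * ((α + β) * γ * Real.sinh (γ * L)) = c * β := by
      rw [hK]; exact div_mul_cancel₀ _ hne
    linear_combination hKm
end

section
/- The steady-state mean BVP of the neurotransmitter model has at most one solution: if v₀, v₁ satisfy the ODE system and all four boundary conditions, then for every x ∈ [0, L] one has v₀(x) = (c·β/((α+β)·γ·sinh(γL)))·(cosh(γL) − cosh(γx)) and v₁(x) = (c·β/((α+β)·γ·sinh(γL)))·((β/α)·cosh(γL) + cosh(γx)). -/
/-!
The total amount `s = v₀ + v₁` satisfies `s'' = 0` and the combination `u = α v₁ - β v₀`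
satisfies `u'' = γ² u`; with the Neumann conditions at `0` this forces `s` to be constant and
`u = u(0) cosh (γ x)`. Since `s' = 0`, the flux condition at `L` gives `u'(L) = c β`, i.e.
`u(0) γ sinh (γ L) = c β`, and `v₀(L) = 0` gives `s = v₁(L) = u(0) cosh (γ L) / α`.
Solving the linear system `v₀ + v₁ = s`, `α v₁ - β v₀ = u` yields the formulas.
-/

open Real Set

theorem eq_of_hasDerivAt_eq_zero {f : ℝ → ℝ} {L : ℝ}
    (hf : ∀ x ∈ Icc 0 L, HasDerivAt f 0 x) : ∀ x ∈ Icc 0 L, f x = f 0 :=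
  constant_of_has_deriv_right_zero (fun x hx => (hf x hx).continuousAt.continuousWithinAt)
    fun x hx => (hf x (Ico_subset_Icc_self hx)).hasDerivWithinAt

theorem eq_mul_exp_of_hasDerivAt {f : ℝ → ℝ} {k L : ℝ}
    (hf : ∀ x ∈ Icc 0 L, HasDerivAt f (k * f x) x) :
    ∀ x ∈ Icc 0 L, f x = f 0 * exp (k * x) := by
  have hconst := eq_of_hasDerivAt_eq_zero (f := fun x => f x * exp (-(k * x))) fun x hx =>
    ((hf x hx).mul ((hasDerivAt_id x).const_mul k).neg.exp).congr_deriv (by ring)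
  intro x hx
  calc f x = f x * exp (-(k * x)) * exp (k * x) := by rw [mul_assoc, ← exp_add]; simp
    _ = f 0 * exp (k * x) := by rw [hconst x hx]; simp

theorem eq_mul_cosh_of_hasDerivAt {u u' : ℝ → ℝ} {k L : ℝ}
    (hu : ∀ x ∈ Icc 0 L, HasDerivAt u (u' x) x)
    (hu' : ∀ x ∈ Icc 0 L, HasDerivAt u' (k ^ 2 * u x) x) (h0 : u' 0 = 0) :
    ∀ x ∈ Icc 0 L, u x = u 0 * cosh (k * x) ∧ u' x = u 0 * k * sinh (k * x) := by
  -- `u' ± k u` solve first-order equations; recovering `u'` before `u` avoids dividing by `k`.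
  have hplus := eq_mul_exp_of_hasDerivAt (f := fun x => u' x + k * u x) (k := k) fun x hx =>
    ((hu' x hx).add ((hu x hx).const_mul k)).congr_deriv (by ring)
  have hminus := eq_mul_exp_of_hasDerivAt (f := fun x => u' x - k * u x) (k := -k) fun x hx =>
    ((hu' x hx).sub ((hu x hx).const_mul k)).congr_deriv (by ring)
  have hderiv : ∀ x ∈ Icc 0 L, u' x = u 0 * k * sinh (k * x) := by
    intro x hx
    rw [sinh_eq, ← neg_mul]
    linear_combination (hplus x hx + hminus x hx) / 2 + (h0 / 2) * (exp (k * x) + exp (-k * x))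
  have hval := eq_of_hasDerivAt_eq_zero (f := fun x => u x - u 0 * cosh (k * x)) fun x hx =>
    ((hu x hx).sub (((hasDerivAt_id x).const_mul k).cosh.const_mul (u 0))).congr_deriv
      (by simp [hderiv x hx]; ring)
  refine fun x hx => ⟨?_, hderiv x hx⟩
  simpa [sub_eq_zero] using hval x hx

theorem ContDiffOn.hasDerivAt_and_hasDerivAt_deriv {f : ℝ → ℝ} {s : Set ℝ}
    (hf : ContDiffOn ℝ 2 f s) (hs : IsOpen s) {x : ℝ} (hx : x ∈ s) :
    HasDerivAt f (deriv f x) x ∧ HasDerivAt (deriv f) (deriv (deriv f) x) x :=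
  ⟨((hf.differentiableOn (by norm_num)).differentiableAt (hs.mem_nhds hx)).hasDerivAt,
    (((hf.deriv_of_isOpen (m := 1) hs (by norm_num)).differentiableOn one_ne_zero).differentiableAt
      (hs.mem_nhds hx)).hasDerivAt⟩

theorem neurotransmitter_bvp_uniqueness_general
    (L D α β c γ : ℝ) (hL : 0 < L) (hD : 0 < D) (hα : 0 < α) (hβ : 0 < β)
    (hγ : γ = Real.sqrt ((α + β) / D))
    (v₀ v₁ : ℝ → ℝ) (a b : ℝ) (ha : a < 0) (hb : L < b)
    (hreg0 : ContDiffOn ℝ 2 v₀ (Set.Ioo a b))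
    (hreg1 : ContDiffOn ℝ 2 v₁ (Set.Ioo a b))
    (hode0 : ∀ x ∈ Set.Icc (0:ℝ) L, D * deriv (deriv v₀) x = β * v₀ x - α * v₁ x)
    (hode1 : ∀ x ∈ Set.Icc (0:ℝ) L, D * deriv (deriv v₁) x = α * v₁ x - β * v₀ x)
    (hbc0 : deriv v₀ 0 = 0) (hbc1 : deriv v₁ 0 = 0)
    (hbc2 : v₀ L = 0) (hbc3 : deriv v₁ L = c * β / (α + β)) :
    ∀ x ∈ Set.Icc (0:ℝ) L,
      v₀ x = (c * β / ((α + β) * γ * Real.sinh (γ * L))) *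
        (Real.cosh (γ * L) - Real.cosh (γ * x)) ∧
      v₁ x = (c * β / ((α + β) * γ * Real.sinh (γ * L))) *
        ((β / α) * Real.cosh (γ * L) + Real.cosh (γ * x)) := by
  have hsub : Icc 0 L ⊆ Ioo a b := Icc_subset_Ioo ha hb
  have hv₀ x (hx : x ∈ Icc 0 L) := hreg0.hasDerivAt_and_hasDerivAt_deriv isOpen_Ioo (hsub hx)
  have hv₁ x (hx : x ∈ Icc 0 L) := hreg1.hasDerivAt_and_hasDerivAt_deriv isOpen_Ioo (hsub hx)
  have hγ2 : γ ^ 2 = (α + β) / D := by rw [hγ, sq_sqrt (by positivity)]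
  have hγ0 : 0 < γ := hγ ▸ sqrt_pos.2 (by positivity)
  have hsum := eq_mul_cosh_of_hasDerivAt (k := 0) (u := fun x => v₀ x + v₁ x)
    (fun x hx => (hv₀ x hx).1.add (hv₁ x hx).1)
    (fun x hx => ((hv₀ x hx).2.add (hv₁ x hx).2).congr_deriv <|
      mul_left_cancel₀ hD.ne' (by linear_combination hode0 x hx + hode1 x hx))
    (by simp [hbc0, hbc1])
  have hdiff := eq_mul_cosh_of_hasDerivAt (k := γ) (u := fun x => α * v₁ x - β * v₀ x)
    (fun x hx => ((hv₁ x hx).1.const_mul α).sub ((hv₀ x hx).1.const_mul β))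
    (fun x hx => (((hv₁ x hx).2.const_mul α).sub ((hv₀ x hx).2.const_mul β)).congr_deriv <| by
      rw [hγ2]; field_simp; linear_combination α * hode1 x hx - β * hode0 x hx)
    (by simp [hbc0, hbc1])
  simp only [zero_mul, cosh_zero, sinh_zero, mul_one, mul_zero] at hsum
  obtain ⟨hsL, hs'L⟩ := hsum L ⟨hL.le, le_rfl⟩
  obtain ⟨hdL, hd'L⟩ := hdiff L ⟨hL.le, le_rfl⟩
  rw [hbc2] at hsL hdL
  rw [hbc3] at hs'L hd'L
  have hamp : (α * v₁ 0 - β * v₀ 0) * γ * sinh (γ * L) = c * β := by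
    have hflux : (α + β) * (c * β / (α + β)) = c * β := by field_simp
    linear_combination -hd'L - β * hs'L + hflux
  have hsinh : sinh (γ * L) ≠ 0 := (sinh_pos_iff.2 (mul_pos hγ0 hL)).ne'
  intro x hx
  rw [← hamp]
  constructor
  · field_simp
    linear_combination α * (hsum x hx).1 - (hdiff x hx).1 + hdL - α * hsL
  · field_simp
    linear_combination α * (hdiff x hx).1 + α * β * (hsum x hx).1 + β * hdL - α * β * hsL

/-- Uniqueness for the steady-state mean BVP of the neurotransmitter
model: any solution equals the explicit one. -/
theorem neurotransmitter_bvp_uniqueness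
    (L D α β c γ : ℝ) (hL : 0 < L) (hD : 0 < D) (hα : 0 < α) (hβ : 0 < β) (hc : 0 < c)
    (hγ : γ = Real.sqrt ((α + β) / D))
    (v₀ v₁ : ℝ → ℝ) (a b : ℝ) (ha : a < 0) (hb : L < b)
    (hreg0 : ContDiffOn ℝ 2 v₀ (Set.Ioo a b))
    (hreg1 : ContDiffOn ℝ 2 v₁ (Set.Ioo a b))
    (hode0 : ∀ x ∈ Set.Icc (0:ℝ) L, D * deriv (deriv v₀) x = β * v₀ x - α * v₁ x)
    (hode1 : ∀ x ∈ Set.Icc (0:ℝ) L, D * deriv (deriv v₁) x = α * v₁ x - β * v₀ x)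
    (hbc0 : deriv v₀ 0 = 0) (hbc1 : deriv v₁ 0 = 0)
    (hbc2 : v₀ L = 0) (hbc3 : deriv v₁ L = c * β / (α + β)) :
    ∀ x ∈ Set.Icc (0:ℝ) L,
      v₀ x = (c * β / ((α + β) * γ * Real.sinh (γ * L))) *
        (Real.cosh (γ * L) - Real.cosh (γ * x)) ∧
      v₁ x = (c * β / ((α + β) * γ * Real.sinh (γ * L))) *
        ((β / α) * Real.cosh (γ * L) + Real.cosh (γ * x)) :=
  neurotransmitter_bvp_uniqueness_general L D α β c γ hL hD hα hβ hγ v₀ v₁ a b ha hb hreg0 hreg1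
    hode0 hode1 hbc0 hbc1 hbc2 hbc3
end

section
/- The pair of functions V₀(x) = m·(ρ·x + (1−ρ)·sinh(γx)/(γ·cosh(γL))) and V₁(x) = m·(1−ρ)·(x − sinh(γx)/(γ·cosh(γL))), with m = ρ·c/(ρ·L + (1−ρ)·tanh(γL)/γ), is a solution of the steady-state mean BVP of the insect-respiration model: V₀ and V₁ are smooth on ℝ, satisfy D·V₀''(x) = β·V₀(x) − α·V₁(x) and D·V₁''(x) = α·V₁(x) − β·V₀(x) for all x ∈ [0, L], and satisfy the boundary conditions V₀(0) = 0, V₁(0) = 0, V₁'(L) = 0, and V₀(L) = c·α/(α+β). -/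
/-- The explicit pair `(V₀, V₁)` solves the steady-state mean BVP of the
insect-respiration model. -/
theorem insect_explicit_solution
    (L D α β c ρ γ m : ℝ) (hL : 0 < L) (hD : 0 < D) (hα : 0 < α) (hβ : 0 < β) (hc : 0 < c)
    (hρ : ρ = α / (α + β)) (hγ : γ = Real.sqrt ((α + β) / D))
    (hm : m = ρ * c / (ρ * L + (1 - ρ) * Real.tanh (γ * L) / γ))
    (V₀ V₁ : ℝ → ℝ)
    (hV₀ : V₀ = fun x => m * (ρ * x + (1 - ρ) * Real.sinh (γ * x) / (γ * Real.cosh (γ * L))))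
    (hV₁ : V₁ = fun x => m * (1 - ρ) * (x - Real.sinh (γ * x) / (γ * Real.cosh (γ * L)))) :
    ContDiff ℝ (⊤ : ℕ∞) V₀ ∧ ContDiff ℝ (⊤ : ℕ∞) V₁ ∧
    (∀ x ∈ Set.Icc (0:ℝ) L, D * deriv (deriv V₀) x = β * V₀ x - α * V₁ x) ∧
    (∀ x ∈ Set.Icc (0:ℝ) L, D * deriv (deriv V₁) x = α * V₁ x - β * V₀ x) ∧
    V₀ 0 = 0 ∧ V₁ 0 = 0 ∧
    deriv V₁ L = 0 ∧ V₀ L = c * α / (α + β) := by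
  have hαβ : 0 < α + β := by linarith
  have hγpos : 0 < γ := by
    rw [hγ]; exact Real.sqrt_pos.mpr (by positivity)
  have hγne : γ ≠ 0 := ne_of_gt hγpos
  have hγsq : D * γ ^ 2 = α + β := by
    rw [hγ, Real.sq_sqrt (by positivity)]; field_simp
  have hcoshpos : 0 < Real.cosh (γ * L) := Real.cosh_pos _
  have hcoshne : Real.cosh (γ * L) ≠ 0 := ne_of_gt hcoshpos
  have hρeq : β * ρ = α * (1 - ρ) := by rw [hρ]; field_simp; ring
  -- derivative of sinh(γ x)
  have hs : ∀ x : ℝ, HasDerivAt (fun y => Real.sinh (γ * y)) (γ * Real.cosh (γ * x)) x := by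
    intro x
    have := (Real.hasDerivAt_sinh (γ * x)).comp x ((hasDerivAt_id x).const_mul γ)
    simpa [mul_comm, Function.comp_def] using this
  have hcsh : ∀ x : ℝ, HasDerivAt (fun y => Real.cosh (γ * y)) (γ * Real.sinh (γ * x)) x := by
    intro x
    have := (Real.hasDerivAt_cosh (γ * x)).comp x ((hasDerivAt_id x).const_mul γ)
    simpa [mul_comm, Function.comp_def] using this
  -- first derivatives
  have hV₀' : ∀ x : ℝ, HasDerivAt V₀
      (m * (ρ * 1 + (1 - ρ) * (γ * Real.cosh (γ * x)) / (γ * Real.cosh (γ * L)))) x := by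
    intro x
    rw [hV₀]
    exact (((hasDerivAt_id x).const_mul ρ).add
      (((hs x).const_mul (1 - ρ)).div_const _)).const_mul m
  have hV₁' : ∀ x : ℝ, HasDerivAt V₁
      (m * (1 - ρ) * (1 - (γ * Real.cosh (γ * x)) / (γ * Real.cosh (γ * L)))) x := by
    intro x
    rw [hV₁]
    exact ((hasDerivAt_id x).sub ((hs x).div_const _)).const_mul (m * (1 - ρ))
  have hdV₀ : deriv V₀ = fun x =>
      m * (ρ * 1 + (1 - ρ) * (γ * Real.cosh (γ * x)) / (γ * Real.cosh (γ * L))) :=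
    funext fun x => (hV₀' x).deriv
  have hdV₁ : deriv V₁ = fun x =>
      m * (1 - ρ) * (1 - (γ * Real.cosh (γ * x)) / (γ * Real.cosh (γ * L))) :=
    funext fun x => (hV₁' x).deriv
  -- second derivatives
  have hV₀'' : ∀ x : ℝ, HasDerivAt (deriv V₀)
      (m * (0 + (1 - ρ) * (γ * (γ * Real.sinh (γ * x))) / (γ * Real.cosh (γ * L)))) x := by
    intro x
    rw [hdV₀]
    exact ((hasDerivAt_const x (ρ * 1)).add
      (((hcsh x).const_mul γ |>.const_mul (1 - ρ)).div_const _)).const_mul m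
  have hV₁'' : ∀ x : ℝ, HasDerivAt (deriv V₁)
      (m * (1 - ρ) * (0 - (γ * (γ * Real.sinh (γ * x))) / (γ * Real.cosh (γ * L)))) x := by
    intro x
    rw [hdV₁]
    exact ((hasDerivAt_const x (1:ℝ)).sub
      (((hcsh x).const_mul γ).div_const _)).const_mul (m * (1 - ρ))
  have hsinh : ContDiff ℝ (⊤ : ℕ∞) fun x : ℝ => Real.sinh (γ * x) :=
    Real.contDiff_sinh.comp (contDiff_const.mul contDiff_id)
  refine ⟨?_, ?_, ?_, ?_, ?_, ?_, ?_, ?_⟩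
  · rw [hV₀]
    exact contDiff_const.mul ((contDiff_const.mul contDiff_id).add
      ((contDiff_const.mul hsinh).div_const _))
  · rw [hV₁]
    exact contDiff_const.mul (contDiff_id.sub (hsinh.div_const _))
  · intro x _
    rw [(hV₀'' x).deriv, hV₀, hV₁]
    simp only
    field_simp
    linear_combination (m*(1-ρ)*Real.sinh (γ*x))*hγsq 
      + (-(m*γ*x*Real.cosh (γ*L)))*hρeq
  · intro x _
    rw [(hV₁'' x).deriv, hV₀, hV₁]
    simp only
    field_simp
    linear_combination (-(m*(1-ρ)*Real.sinh (γ*x)))*hγsq + (m*γ*x*Real.cosh (γ*L))*hρeq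
  · rw [hV₀]; simp
  · rw [hV₁]; simp
  · rw [hdV₁]; field_simp; simp
  · rw [hV₀]
    have htanh : Real.tanh (γ * L) = Real.sinh (γ * L) / Real.cosh (γ * L) :=
      Real.tanh_eq_sinh_div_cosh _
    have hρpos : 0 < ρ := by rw [hρ]; positivity
    have h1ρ : 0 < 1 - ρ := by rw [hρ]; rw [sub_pos]; rw [div_lt_one hαβ]; linarith
    have hshpos : 0 < Real.sinh (γ * L) := Real.sinh_pos_iff.mpr (by positivity)
    have hden : 0 < ρ * L + (1 - ρ) * Real.tanh (γ * L) / γ := by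
      have : 0 < Real.tanh (γ * L) := by rw [htanh]; positivity
      positivity
    have hρc : c * α / (α + β) = ρ * c := by rw [hρ]; ring
    rw [hm, hρc]
    simp only
    rw [htanh] at *
    have hEq : ρ * L + (1 - ρ) * Real.sinh (γ * L) / (γ * Real.cosh (γ * L))
        = ρ * L + (1 - ρ) * (Real.sinh (γ * L) / Real.cosh (γ * L)) / γ := by
      field_simp
    rw [hEq, div_mul_cancel₀ _ (ne_of_gt hden)]
end
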